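/- arXiv:2512.10822 — 2 statements merged into one kernel-verified Lean document; each statement's English description precedes it below -/
import Mathlib

section
/- Let γ ∈ [0,1), ℓ : ℕ → ℝ bounded, and B_γ the unique bounded fixed point of (T B)(t) = (1−γ)ℓ(t) + γ min{ℓ(t), B(t+1)}. If ℓ(t) ≥ 0 for all t, then B_γ(t) ≥ 0 for all t; conversely if B_γ(t) ≥ 0 then ℓ(t) ≥ 0. -/
/-- For the bounded fixed point `B` of the discounted barrier backup:
if `ℓ t ≥ 0` for all `t` then `B t ≥ 0` for all `t`; conversely, if `B t ≥ 0`
then `ℓ t ≥ 0`. -/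
theorem discounted_fixed_point_nonneg (γ : ℝ) (hγ : γ ∈ Set.Ico (0:ℝ) 1)
    (ℓ B : ℕ → ℝ) (hℓ : ∃ M, ∀ t, |ℓ t| ≤ M) (hB : ∃ M, ∀ t, |B t| ≤ M)
    (hfix : ∀ t, B t = (1 - γ) * ℓ t + γ * min (ℓ t) (B (t + 1))) :
    ((∀ t, 0 ≤ ℓ t) → ∀ t, 0 ≤ B t) ∧ (∀ t, 0 ≤ B t → 0 ≤ ℓ t) := by
  obtain ⟨hγ0, hγ1⟩ := hγ
  constructor
  · intro hl t
    obtain ⟨M, hM⟩ := hB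
    have hM0 : 0 ≤ M := le_trans (abs_nonneg _) (hM 0)
    have key : ∀ n t, -(γ ^ n * M) ≤ B t := by
      intro n
      induction n with
      | zero => intro t; simpa using neg_abs_le (B t) |>.trans' (by simpa using neg_le_neg (hM t))
      | succ n ih =>
        intro t
        have hmin : -(γ ^ n * M) ≤ min (ℓ t) (B (t + 1)) := by
          refine le_min ?_ (ih (t + 1))
          have : -(γ ^ n * M) ≤ 0 := neg_nonpos.mpr (mul_nonneg (pow_nonneg hγ0 n) hM0)
          exact this.trans (hl t)
        have h1 : 0 ≤ (1 - γ) * ℓ t := mul_nonneg (by linarith) (hl t)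
        have h2 : γ * -(γ ^ n * M) ≤ γ * min (ℓ t) (B (t + 1)) :=
          mul_le_mul_of_nonneg_left hmin hγ0
        have := hfix t
        have : (1 - γ) * ℓ t + γ * -(γ ^ n * M) ≤ B t := by
          rw [hfix t]; gcongr
        calc -(γ ^ (n + 1) * M) = 0 + γ * -(γ ^ n * M) := by ring
          _ ≤ (1 - γ) * ℓ t + γ * -(γ ^ n * M) := by linarith
          _ ≤ B t := this
    have hlim : Filter.Tendsto (fun n => -(γ ^ n * M)) Filter.atTop (nhds 0) := by
      have : Filter.Tendsto (fun n : ℕ => γ ^ n) Filter.atTop (nhds 0) :=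
        tendsto_pow_atTop_nhds_zero_of_lt_one hγ0 hγ1
      simpa using ((this.mul_const M).neg)
    exact le_of_tendsto hlim (Filter.Eventually.of_forall fun n => key n t)
  · intro t hBt
    have hmin : min (ℓ t) (B (t + 1)) ≤ ℓ t := min_le_left _ _
    have : B t ≤ ℓ t := by
      rw [hfix t]
      nlinarith [mul_le_mul_of_nonneg_left hmin hγ0]
    linarith
end

section
/- For any γ₁, γ₂ ∈ [0,1) and bounded ℓ with ‖ℓ‖_∞ ≤ M, the corresponding fixed points B_{γ₁}, B_{γ₂} of the discounted backup (T_γ B)(t) = (1−γ)ℓ(t) + γ min{ℓ(t), B(t+1)} satisfy ‖B_{γ₁} − B_{γ₂}‖_∞ ≤ 2M·|γ₁ − γ₂| / (1 − max{γ₁, γ₂}). -/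
/-!
Both backups map the sup-norm ball of radius `M` into itself, so a bounded fixed point `B₂` has
`‖B₂‖ ≤ M`. The two backups differ by at most `|γ₁ - γ₂| (|ℓ| + |min ℓ B₂|) ≤ 2M |γ₁ - γ₂|`,
and `T_{γ₁}` is a `γ₁`-contraction, so `‖B₁ - B₂‖ ≤ 2M |γ₁ - γ₂| + γ₁ ‖B₁ - B₂‖`.
-/

open Set Function

def discountedBackup (γ : ℝ) (ℓ B : ℕ → ℝ) (t : ℕ) : ℝ :=
  (1 - γ) * ℓ t + γ * min (ℓ t) (B (t + 1))

lemma le_div_one_sub_of_le_add_mul_succ {d : ℕ → ℝ} {a c : ℝ} (hd : BddAbove (range d))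
    (hc₀ : 0 ≤ c) (hc₁ : c < 1) (h : ∀ t, d t ≤ a + c * d (t + 1)) (t : ℕ) :
    d t ≤ a / (1 - c) := by
  have hsup : ⨆ s, d s ≤ a + c * ⨆ s, d s :=
    ciSup_le fun s => (h s).trans <| by gcongr; exact le_ciSup hd (s + 1)
  rw [le_div_iff₀ (by linarith)]
  nlinarith [le_ciSup hd t]

lemma abs_discountedBackup_le {γ M : ℝ} (hγ : γ ∈ Icc (0 : ℝ) 1) {ℓ : ℕ → ℝ}
    (hℓ : ∀ t, |ℓ t| ≤ M) (B : ℕ → ℝ) (t : ℕ) :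
    |discountedBackup γ ℓ B t| ≤ (1 - γ) * M + γ * max M |B (t + 1)| := by
  obtain ⟨hγ₀, hγ₁⟩ := hγ
  have hmin : |min (ℓ t) (B (t + 1))| ≤ max M |B (t + 1)| :=
    abs_min_le_max_abs_abs.trans (max_le_max_right _ (hℓ t))
  calc |discountedBackup γ ℓ B t|
      ≤ (1 - γ) * |ℓ t| + γ * |min (ℓ t) (B (t + 1))| := by
        unfold discountedBackup
        refine (abs_add_le _ _).trans_eq ?_
        rw [abs_mul, abs_mul, abs_of_nonneg (sub_nonneg.2 hγ₁), abs_of_nonneg hγ₀]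
    _ ≤ (1 - γ) * M + γ * max M |B (t + 1)| := by gcongr; exact hℓ t

lemma abs_le_of_isFixedPt_discountedBackup {γ M : ℝ} (hγ : γ ∈ Ico (0 : ℝ) 1) {ℓ B : ℕ → ℝ}
    (hℓ : ∀ t, |ℓ t| ≤ M) (hB : ∃ C, ∀ t, |B t| ≤ C)
    (hfix : IsFixedPt (discountedBackup γ ℓ) B) (t : ℕ) : |B t| ≤ M := by
  obtain ⟨C, hC⟩ := hB
  have hbdd : BddAbove (range fun s => max M |B s|) :=
    ⟨max M C, forall_mem_range.2 fun s => max_le_max_left _ (hC s)⟩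
  -- `max M |B|` rather than `|B|` satisfies the linear recursion the estimate needs.
  have hstep : ∀ s, max M |B s| ≤ (1 - γ) * M + γ * max M |B (s + 1)| := by
    intro s
    refine max_le ?_ ?_
    · nlinarith [le_max_left M |B (s + 1)|, hγ.1]
    · rw [← congrFun hfix s]
      exact abs_discountedBackup_le (Ico_subset_Icc_self hγ) hℓ B s
  have := le_div_one_sub_of_le_add_mul_succ hbdd hγ.1 hγ.2 hstep t
  rw [mul_div_cancel_left₀ _ (by linarith [hγ.2])] at this
  exact (le_max_right _ _).trans this

lemma abs_discountedBackup_sub_le {γ₁ γ₂ M : ℝ} (hγ₁ : 0 ≤ γ₁) {ℓ B₁ B₂ : ℕ → ℝ}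
    (hℓ : ∀ t, |ℓ t| ≤ M) (hB₂ : ∀ t, |B₂ t| ≤ M) (t : ℕ) :
    |discountedBackup γ₁ ℓ B₁ t - discountedBackup γ₂ ℓ B₂ t|
      ≤ 2 * M * |γ₁ - γ₂| + γ₁ * |B₁ (t + 1) - B₂ (t + 1)| := by
  set m₁ := min (ℓ t) (B₁ (t + 1))
  set m₂ := min (ℓ t) (B₂ (t + 1))
  have hm₂ : |m₂| ≤ M := abs_min_le_max_abs_abs.trans (max_le (hℓ t) (hB₂ (t + 1)))
  have hm : |m₁ - m₂| ≤ |B₁ (t + 1) - B₂ (t + 1)| := by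
    simpa using abs_min_sub_min_le_max (ℓ t) (B₁ (t + 1)) (ℓ t) (B₂ (t + 1))
  calc |discountedBackup γ₁ ℓ B₁ t - discountedBackup γ₂ ℓ B₂ t|
      = |(γ₁ - γ₂) * (m₂ - ℓ t) + γ₁ * (m₁ - m₂)| := by
        simp only [discountedBackup, m₁, m₂]; ring_nf
    _ ≤ |γ₁ - γ₂| * (|m₂| + |ℓ t|) + γ₁ * |m₁ - m₂| := by
        refine (abs_add_le _ _).trans ?_
        rw [abs_mul, abs_mul, abs_of_nonneg hγ₁]
        gcongr
        exact abs_sub _ _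
    _ ≤ 2 * M * |γ₁ - γ₂| + γ₁ * |B₁ (t + 1) - B₂ (t + 1)| := by
        nlinarith [abs_nonneg (γ₁ - γ₂), hℓ t, mul_le_mul_of_nonneg_left hm hγ₁]

/-- Perturbation bound in the discount factor: for `γ₁, γ₂ ∈ [0,1)` and `‖ℓ‖_∞ ≤ M`,
the bounded fixed points of the corresponding discounted barrier backups satisfy
`‖B₁ - B₂‖_∞ ≤ 2 M |γ₁ - γ₂| / (1 - max γ₁ γ₂)`. -/
theorem discounted_fixed_point_discount_perturbation (γ₁ γ₂ : ℝ)
    (hγ₁ : γ₁ ∈ Set.Ico (0:ℝ) 1) (hγ₂ : γ₂ ∈ Set.Ico (0:ℝ) 1)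
    (ℓ B₁ B₂ : ℕ → ℝ) (M : ℝ) (hℓ : ∀ t, |ℓ t| ≤ M)
    (hB₁bdd : ∃ C, ∀ t, |B₁ t| ≤ C) (hB₂bdd : ∃ C, ∀ t, |B₂ t| ≤ C)
    (hfix₁ : ∀ t, B₁ t = (1 - γ₁) * ℓ t + γ₁ * min (ℓ t) (B₁ (t + 1)))
    (hfix₂ : ∀ t, B₂ t = (1 - γ₂) * ℓ t + γ₂ * min (ℓ t) (B₂ (t + 1))) :
    ∀ t, |B₁ t - B₂ t| ≤ 2 * M * |γ₁ - γ₂| / (1 - max γ₁ γ₂) := by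
  intro t
  have hB₂ : ∀ s, |B₂ s| ≤ M := abs_le_of_isFixedPt_discountedBackup hγ₂ hℓ hB₂bdd
    (funext fun s => (hfix₂ s).symm)
  obtain ⟨C, hC⟩ := hB₁bdd
  have hbdd : BddAbove (range fun s => |B₁ s - B₂ s|) :=
    ⟨C + M, forall_mem_range.2 fun s => (abs_sub _ _).trans (add_le_add (hC s) (hB₂ s))⟩
  have hstep : ∀ s, |B₁ s - B₂ s| ≤ 2 * M * |γ₁ - γ₂| + γ₁ * |B₁ (s + 1) - B₂ (s + 1)| := by
    intro s
    rw [hfix₁ s, hfix₂ s]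
    exact abs_discountedBackup_sub_le hγ₁.1 hℓ hB₂ s
  have hM : 0 ≤ M := (abs_nonneg _).trans (hℓ 0)
  calc |B₁ t - B₂ t| ≤ 2 * M * |γ₁ - γ₂| / (1 - γ₁) :=
        le_div_one_sub_of_le_add_mul_succ hbdd hγ₁.1 hγ₁.2 hstep t
    _ ≤ 2 * M * |γ₁ - γ₂| / (1 - max γ₁ γ₂) := by
        gcongr
        · linarith [max_lt hγ₁.2 hγ₂.2]
        · exact le_max_left _ _
end
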